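/- Let K be a field of characteristic 0, let P(X,Y) ∈ K[[X,Y]] be a formal power series in two variables, and let f(X) ∈ K[[X]] be a formal power series with f(0) = 0 satisfying P(X, f(X)) = f(X) and P'_Y(0,0) = 0. Then for every n ≥ 0, the coefficient of X^n in f equals the sum over m ≥ 1 of (1/m) times the coefficient of X^n Y^{m-1} in P(X,Y)^m, where this sum has only finitely many nonzero terms. -/

import Mathlib

/-- Formal partial derivative of a two-variable power series with respect to
`Y` (variable `1`): the coefficient of `X^i Y^j` is `(j+1)` times the
coefficient of `X^i Y^(j+1)` in `P`. -/
noncomputable def pderivY {K : Type*} [Field K] (P : MvPowerSeries (Fin 2) K) :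
    MvPowerSeries (Fin 2) K :=
  fun d => ((d 1 + 1 : ℕ) : K) *
    MvPowerSeries.coeff (d + Finsupp.single 1 1) P

/-- Substitution of `f(X)` for `Y` in `P(X,Y)`: the series `P(X, f(X))`,
well defined (given coefficientwise) when `f` has zero constant term. -/
noncomputable def substY {K : Type*} [Field K] (P : MvPowerSeries (Fin 2) K)
    (f : PowerSeries K) : PowerSeries K :=
  PowerSeries.mk fun n => ∑ i ∈ Finset.range (n + 1), ∑ j ∈ Finset.range (n + 1),
    MvPowerSeries.coeff (Finsupp.single 0 i + Finsupp.single 1 j) P *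
      PowerSeries.coeff (n - i) (f ^ j)

/-!
Lagrange inversion in implicit form. Let `E = Y ∂/∂Y`. The Leibniz rule gives
`(k + m) · E(Pᵏ) · Pᵐ = k · E(Pᵏ⁺ᵐ)`, and `E` multiplies `[XⁿYᵐ]` by `m`, so
`[XⁿYᵐ] (E(Pᵏ) · Pᵐ) = k m / (k + m) · [XⁿYᵐ] Pᵏ⁺ᵐ`. With this identity, the numbers
`L(n, k) = ∑_{M ≥ k} (k / M) [Xⁿ Y^(M-k)] P^M` satisfy the recursion
`L(n, k) = [XⁿY⁰] Pᵏ + ∑_{i + i' = n} ∑_{j ≥ 1} [XⁱYʲ] Pᵏ · L(i', j)`, which the coefficients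
`[Xⁿ] fᵏ` also satisfy because `fᵏ = Pᵏ(X, f)`. Give `X` weight 2 and `Y` weight 1: every monomial
of `P` has weight at least 2, so `[XⁱYʲ] Pᵏ = 0` unless `2i + j ≥ 2k`, and the recursion for
`(n, k)` only involves pairs `(i', j)` with `2i' - j < 2n - k`. By induction
`[Xⁿ] fᵏ = L(n, k)` for all `k ≥ 1`, and `k = 1` is the theorem.
-/

open Finset MvPowerSeries

theorem Derivation.add_nsmul_map_pow_mul_pow {R A : Type*} [CommSemiring R] [CommSemiring A]
    [Algebra R A] (D : Derivation R A A) (a : A) (k m : ℕ) :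
    (k + m) • (D (a ^ k) * a ^ m) = k • D (a ^ (k + m)) := by
  cases k with
  | zero => simp
  | succ k =>
    rw [D.leibniz_pow, D.leibniz_pow, show k + 1 + m - 1 = k + m by omega]
    simp only [smul_eq_mul, nsmul_eq_mul, Nat.add_sub_cancel]
    ring

theorem PowerSeries.coeff_pow_eq_zero_of_lt {R : Type*} [CommSemiring R] {f : PowerSeries R}
    (hf : constantCoeff f = 0) {m j : ℕ} (h : m < j) : coeff m (f ^ j) = 0 :=
  X_pow_dvd_iff.mp (pow_dvd_pow_of_dvd (X_dvd_iff.mpr hf) j) m h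

namespace MvPowerSeries

variable {σ R : Type*} [CommSemiring R]

noncomputable def euler (i : σ) : Derivation R (MvPowerSeries σ R) (MvPowerSeries σ R) :=
  (X i : MvPowerSeries σ R) • pderiv R i

theorem coeff_euler (i : σ) (f : MvPowerSeries σ R) (d : σ →₀ ℕ) :
    coeff d (euler i f) = d i * coeff d f := by
  classical
  rw [euler, Derivation.smul_apply, smul_eq_mul, X, coeff_monomial_mul]
  split_ifs with h
  · rw [one_mul, coeff_pderiv, tsub_add_cancel_of_le h, Finsupp.tsub_apply,
      Finsupp.single_eq_same, ← Nat.cast_add_one, Nat.sub_add_cancel (Finsupp.single_le_iff.mp h),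
      mul_comm]
  · rw [Finsupp.single_le_iff, not_le, Nat.lt_one_iff] at h
    simp [h]

end MvPowerSeries

section Bivariate

variable {R : Type*} [CommSemiring R]

theorem Finsupp.single_add_single_fin_two (d : Fin 2 →₀ ℕ) :
    Finsupp.single 0 (d 0) + Finsupp.single 1 (d 1) = d := by
  ext s; fin_cases s <;> simp

noncomputable def coeffXY (i j : ℕ) : MvPowerSeries (Fin 2) R →ₗ[R] R :=
  coeff (Finsupp.single 0 i + Finsupp.single 1 j)

theorem coeffXY_mul (n m : ℕ) (Q S : MvPowerSeries (Fin 2) R) :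
    coeffXY n m (Q * S) = ∑ p ∈ antidiagonal n, ∑ q ∈ antidiagonal m,
      coeffXY p.1 q.1 Q * coeffXY p.2 q.2 S := by
  rw [coeffXY, coeff_mul, ← sum_product']
  refine sum_nbij' (fun d => ((d.1 0, d.2 0), (d.1 1, d.2 1)))
    (fun pq => (Finsupp.single 0 pq.1.1 + Finsupp.single 1 pq.2.1,
      Finsupp.single 0 pq.1.2 + Finsupp.single 1 pq.2.2)) ?_ ?_ ?_ ?_ ?_
  · intro d hd
    have h := fun s => DFunLike.congr_fun (HasAntidiagonal.mem_antidiagonal.mp hd) s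
    simpa using And.intro (h 0) (h 1)
  · intro pq hpq
    simp only [mem_product, HasAntidiagonal.mem_antidiagonal] at hpq
    rw [HasAntidiagonal.mem_antidiagonal, ← hpq.1, ← hpq.2]
    ext s; fin_cases s <;> simp
  · intro d _
    simp [Finsupp.single_add_single_fin_two]
  · intro pq _
    simp
  · intro d _
    simp [coeffXY, Finsupp.single_add_single_fin_two]

theorem coeffXY_euler (i j : ℕ) (Q : MvPowerSeries (Fin 2) R) :
    coeffXY i j (euler 1 Q) = j * coeffXY i j Q := by
  simp [coeffXY, coeff_euler]

theorem Finsupp.weight_fin_two_apply (a b : ℕ) (d : Fin 2 →₀ ℕ) :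
    weight ![a, b] d = a * d 0 + b * d 1 := by
  simp [weight_apply, sum_fintype, mul_comm]

theorem two_le_weightedOrder_two_one {P : MvPowerSeries (Fin 2) R} (h00 : constantCoeff P = 0)
    (h01 : coeff (Finsupp.single 1 1) P = 0) : 2 ≤ P.weightedOrder ![2, 1] := by
  refine nat_le_weightedOrder _ fun d hd => ?_
  rw [Finsupp.weight_fin_two_apply] at hd
  norm_cast at hd
  rw [← Finsupp.single_add_single_fin_two d]
  obtain ⟨h0, h1 | h1⟩ : d 0 = 0 ∧ (d 1 = 0 ∨ d 1 = 1) := by omega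
  · simpa [h0, h1] using h00
  · simpa [h0, h1] using h01

theorem coeffXY_pow_eq_zero {P : MvPowerSeries (Fin 2) R} (hP : 2 ≤ P.weightedOrder ![2, 1])
    {n j k : ℕ} (h : 2 * n + j < 2 * k) : coeffXY n j (P ^ k) = 0 := by
  have hw : Finsupp.weight ![2, 1] (Finsupp.single 0 n + Finsupp.single 1 j) = 2 * n + j := by
    simp [Finsupp.weight_fin_two_apply]
  refine coeff_eq_zero_of_lt_weightedOrder ![2, 1]
    (lt_of_lt_of_le ?_ (le_weightedOrder_pow ![2, 1] k))
  rw [hw, nsmul_eq_mul]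
  calc ((2 * n + j : ℕ) : ℕ∞) < k * 2 := by norm_cast; omega
    _ ≤ k * P.weightedOrder ![2, 1] := by gcongr

theorem coeffXY_euler_pow_mul_pow (P : MvPowerSeries (Fin 2) R) (n k m : ℕ) :
    (k + m) * coeffXY n m (euler 1 (P ^ k) * P ^ m) = k * m * coeffXY n m (P ^ (k + m)) := by
  have h := congrArg (coeffXY n m) ((euler 1).add_nsmul_map_pow_mul_pow P k m)
  rw [map_nsmul, map_nsmul, coeffXY_euler, nsmul_eq_mul, nsmul_eq_mul] at h
  rw [← Nat.cast_add, h, mul_assoc]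

end Bivariate

section Substitution

variable {K : Type*} [Field K]

theorem hasSubst_X_of_constantCoeff_eq_zero {f : PowerSeries K}
    (hf : PowerSeries.constantCoeff f = 0) :
    HasSubst ![PowerSeries.X, f] :=
  hasSubst_of_constantCoeff_zero fun s => by
    fin_cases s
    · exact PowerSeries.constantCoeff_X
    · exact hf

theorem substY_eq_subst (Q : MvPowerSeries (Fin 2) K) {f : PowerSeries K}
    (hf : PowerSeries.constantCoeff f = 0) :
    substY Q f = subst ![PowerSeries.X, f] Q := by
  ext n
  have hprod : ∀ d : Fin 2 →₀ ℕ, (d.prod fun s e => (![PowerSeries.X, f] s) ^ e) =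
      PowerSeries.X ^ d 0 * f ^ d 1 := fun d => by
    rw [Finsupp.prod_fintype _ _ (fun _ => pow_zero _), Fin.prod_univ_two]; rfl
  let e : ℕ × ℕ → (Fin 2 →₀ ℕ) := fun p => Finsupp.single 0 p.1 + Finsupp.single 1 p.2
  have he : Set.InjOn e ↑(range (n + 1) ×ˢ range (n + 1)) := fun p _ q _ hpq => by
    simpa [e, Prod.ext_iff] using And.intro (DFunLike.congr_fun hpq 0) (DFunLike.congr_fun hpq 1)
  rw [substY, PowerSeries.coeff_mk, PowerSeries.coeff,
    coeff_subst (hasSubst_X_of_constantCoeff_eq_zero hf),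
    finsum_eq_sum_of_support_subset (s := (range (n + 1) ×ˢ range (n + 1)).image e),
    sum_image he, sum_product]
  · refine sum_congr rfl fun i hi => sum_congr rfl fun j _ => ?_
    rw [hprod, smul_eq_mul, ← PowerSeries.coeff_def rfl, PowerSeries.coeff_X_pow_mul',
      Finsupp.single_eq_same]
    simp_all [e]
  · intro d hd
    rw [Function.mem_support, hprod, smul_eq_mul, ← PowerSeries.coeff_def rfl,
      PowerSeries.coeff_X_pow_mul', Finsupp.single_eq_same] at hd
    split_ifs at hd with h
    · have : d 1 ≤ n - d 0 := by
        by_contra! h'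
        exact hd (by rw [PowerSeries.coeff_pow_eq_zero_of_lt hf h', mul_zero])
      exact mem_image.mpr ⟨(d 0, d 1), by simp only [mem_product, mem_range]; omega,
        Finsupp.single_add_single_fin_two d⟩
    · simp at hd

theorem substY_pow {P : MvPowerSeries (Fin 2) K} {f : PowerSeries K}
    (hf : PowerSeries.constantCoeff f = 0) (hPf : substY P f = f) (k : ℕ) :
    substY (P ^ k) f = f ^ k := by
  rw [substY_eq_subst _ hf, subst_pow (hasSubst_X_of_constantCoeff_eq_zero hf),
    ← substY_eq_subst _ hf, hPf]

theorem coeff_substY (Q : MvPowerSeries (Fin 2) K) {f : PowerSeries K}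
    (hf : PowerSeries.constantCoeff f = 0) {n B : ℕ} (hB : n < B) :
    PowerSeries.coeff n (substY Q f) =
      ∑ p ∈ antidiagonal n, ∑ j ∈ range B, coeffXY p.1 j Q * PowerSeries.coeff p.2 (f ^ j) := by
  rw [substY, PowerSeries.coeff_mk, Nat.sum_antidiagonal_eq_sum_range_succ_mk]
  refine sum_congr rfl fun i hi => sum_subset (range_subset_range.mpr hB) fun j _ hj => ?_
  rw [mem_range] at hi hj
  rw [PowerSeries.coeff_pow_eq_zero_of_lt hf (by omega), mul_zero]

end Substitution

section Lagrange

variable {K : Type*} [Field K]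

theorem sum_antidiagonal_sum_range_eq_coeffXY_euler_mul (n M : ℕ) (Q S : MvPowerSeries (Fin 2) K) :
    ∑ p ∈ antidiagonal n, ∑ j ∈ range (M + 1),
      (j / M : K) * (coeffXY p.1 j Q * coeffXY p.2 (M - j) S) =
        (1 / M : K) * coeffXY n M (euler 1 Q * S) := by
  rw [coeffXY_mul, mul_sum]
  refine sum_congr rfl fun p _ => ?_
  rw [Nat.sum_antidiagonal_eq_sum_range_succ_mk, mul_sum]
  refine sum_congr rfl fun j _ => ?_
  rw [coeffXY_euler]
  ring

/-- The number `L(n, k)` above. The sum stops at `M = 2n`: further terms vanish as soon as every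
monomial of `P` has weight at least 2. -/
noncomputable def lagrangeCoeff (P : MvPowerSeries (Fin 2) K) (n k : ℕ) : K :=
  ∑ M ∈ Ico k (2 * n + 1), (k / M : K) * coeffXY n (M - k) (P ^ M)

variable {P : MvPowerSeries (Fin 2) K}

theorem lagrangeCoeff_eq_sum_Ico (hP : 2 ≤ P.weightedOrder ![2, 1]) {n B : ℕ}
    (hB : 2 * n + 1 ≤ B) (k : ℕ) :
    lagrangeCoeff P n k = ∑ M ∈ Ico k B, (k / M : K) * coeffXY n (M - k) (P ^ M) :=
  sum_subset (Ico_subset_Ico_right hB) fun M hM hM' => by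
    rw [mem_Ico] at hM hM'
    rw [coeffXY_pow_eq_zero hP (by omega), mul_zero]

theorem lagrangeCoeff_eq_sum_range (hP : 2 ≤ P.weightedOrder ![2, 1]) (n k : ℕ) :
    lagrangeCoeff P n k =
      ∑ m ∈ range (2 * n + 1), (k / (k + m) : K) * coeffXY n m (P ^ (k + m)) := by
  rw [lagrangeCoeff_eq_sum_Ico hP (B := k + (2 * n + 1)) (by omega), sum_Ico_eq_sum_range]
  simp

theorem lagrangeCoeff_eq_add_sum [CharZero K] (hP : 2 ≤ P.weightedOrder ![2, 1]) {k : ℕ}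
    (hk : 0 < k) (n : ℕ) :
    lagrangeCoeff P n k = coeffXY n 0 (P ^ k) + ∑ p ∈ antidiagonal n, ∑ j ∈ range (2 * n),
      coeffXY p.1 (j + 1) (P ^ k) * lagrangeCoeff P p.2 (j + 1) := by
  have hsum : ∑ p ∈ antidiagonal n, ∑ j ∈ range (2 * n),
      coeffXY p.1 (j + 1) (P ^ k) * lagrangeCoeff P p.2 (j + 1) =
        ∑ M ∈ range (2 * n + 1), (1 / M : K) * coeffXY n M (euler 1 (P ^ k) * P ^ M) := by
    calc _ = ∑ p ∈ antidiagonal n, ∑ j ∈ range (2 * n + 1),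
          coeffXY p.1 j (P ^ k) * lagrangeCoeff P p.2 j := by
          refine sum_congr rfl fun p _ => ?_
          simp [sum_range_succ', lagrangeCoeff]
      _ = ∑ p ∈ antidiagonal n, ∑ j ∈ range (2 * n + 1), ∑ M ∈ Ico j (2 * n + 1),
          (j / M : K) * (coeffXY p.1 j (P ^ k) * coeffXY p.2 (M - j) (P ^ M)) := by
          refine sum_congr rfl fun p hp => sum_congr rfl fun j _ => ?_
          rw [HasAntidiagonal.mem_antidiagonal] at hp
          rw [lagrangeCoeff_eq_sum_Ico hP (B := 2 * n + 1) (by omega), mul_sum]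
          exact sum_congr rfl fun M _ => by ring
      _ = ∑ M ∈ range (2 * n + 1), ∑ p ∈ antidiagonal n, ∑ j ∈ range (M + 1),
          (j / M : K) * (coeffXY p.1 j (P ^ k) * coeffXY p.2 (M - j) (P ^ M)) := by
          refine (sum_congr rfl fun p _ => sum_comm' fun j M => ?_).trans sum_comm
          simp only [mem_range, mem_Ico]
          omega
      _ = _ := sum_congr rfl fun M _ => sum_antidiagonal_sum_range_eq_coeffXY_euler_mul n M _ _
  rw [hsum, lagrangeCoeff_eq_sum_range hP, sum_range_succ', sum_range_succ']
  have hk' : (k : K) ≠ 0 := by exact_mod_cast hk.ne'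
  simp only [Nat.cast_zero, add_zero, div_self hk', one_mul, div_zero, zero_mul]
  rw [add_comm]
  congr 1
  refine sum_congr rfl fun m _ => ?_
  have h := coeffXY_euler_pow_mul_pow P n k (m + 1)
  have hkm : (k : K) + (m + 1 : ℕ) ≠ 0 := by exact_mod_cast (by omega : k + (m + 1) ≠ 0)
  have hm : ((m + 1 : ℕ) : K) ≠ 0 := Nat.cast_ne_zero.mpr m.succ_ne_zero
  rw [div_mul_eq_mul_div, one_div, inv_mul_eq_div, div_eq_div_iff hkm hm]
  linear_combination -h

end Lagrange

section Implicit

variable {K : Type*} [Field K] {P : MvPowerSeries (Fin 2) K} {f : PowerSeries K}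

theorem coeff_pow_eq_add_sum (hf : PowerSeries.constantCoeff f = 0) (hPf : substY P f = f)
    (n k : ℕ) :
    PowerSeries.coeff n (f ^ k) = coeffXY n 0 (P ^ k) + ∑ p ∈ antidiagonal n,
      ∑ j ∈ range (2 * n), coeffXY p.1 (j + 1) (P ^ k) * PowerSeries.coeff p.2 (f ^ (j + 1)) := by
  rw [← substY_pow hf hPf k, coeff_substY _ hf (B := 2 * n + 1) (by omega)]
  simp only [sum_range_succ', sum_add_distrib, pow_zero, PowerSeries.coeff_one, mul_ite, mul_one,
    mul_zero]
  rw [add_comm, sum_eq_single (n, 0)]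
  · simp
  · intro p hp hpn
    rw [HasAntidiagonal.mem_antidiagonal] at hp
    exact if_neg fun h0 => hpn (Prod.ext (by omega) h0)
  · simp

theorem coeff_pow_eq_lagrangeCoeff [CharZero K] (hP : 2 ≤ P.weightedOrder ![2, 1])
    (hf : PowerSeries.constantCoeff f = 0) (hPf : substY P f = f) {k : ℕ} (hk : 0 < k) (n : ℕ) :
    PowerSeries.coeff n (f ^ k) = lagrangeCoeff P n k := by
  induction hμ : 2 * n + 1 - k using Nat.strong_induction_on generalizing n k with
  | _ μ ih =>
    rw [coeff_pow_eq_add_sum hf hPf, lagrangeCoeff_eq_add_sum hP hk]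
    congr 1
    refine sum_congr rfl fun p hp => sum_congr rfl fun j hj => ?_
    rw [HasAntidiagonal.mem_antidiagonal] at hp
    rw [mem_range] at hj
    by_cases hpj : 2 * p.1 + (j + 1) < 2 * k
    · rw [coeffXY_pow_eq_zero hP hpj, zero_mul, zero_mul]
    · rw [ih _ (by omega) j.succ_pos p.2 rfl]

end Implicit

/-- **Explicit implicit function theorem in characteristic zero.**
If `f(0) = 0`, `P(X, f(X)) = f(X)` and `P'_Y(0,0) = 0`, then for every `n`,
`[Xⁿ] f = ∑_{m ≥ 1} (1/m) · [Xⁿ Y^(m-1)] (P(X,Y)^m)`,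
the sum (indexed below by `k = m - 1`) having finite support. -/
theorem implicit_coeff_formula_char_zero {K : Type*} [Field K] [CharZero K]
    (P : MvPowerSeries (Fin 2) K) (f : PowerSeries K)
    (hf0 : PowerSeries.constantCoeff f = 0)
    (hPf : substY P f = f)
    (hPY : MvPowerSeries.coeff (Finsupp.single 1 1) P = 0) :
    ∀ n : ℕ,
      (Function.support fun k : ℕ =>
        (1 / ((k : K) + 1)) *
          MvPowerSeries.coeff (Finsupp.single 0 n + Finsupp.single 1 k)
            (P ^ (k + 1))).Finite ∧
      PowerSeries.coeff n f =
        ∑ᶠ k : ℕ,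
          (1 / ((k : K) + 1)) *
            MvPowerSeries.coeff (Finsupp.single 0 n + Finsupp.single 1 k)
              (P ^ (k + 1)) := by
  intro n
  have hP00 : constantCoeff P = 0 := by
    simpa [substY, hf0] using congrArg (PowerSeries.coeff 0) hPf
  have hP := two_le_weightedOrder_two_one hP00 hPY
  let term : ℕ → K := fun k => 1 / ((k : K) + 1) * coeffXY n k (P ^ (k + 1))
  have hsupp : Function.support term ⊆ range (2 * n) := fun k hk => by
    by_contra hkn
    rw [mem_coe, mem_range] at hkn
    exact hk (by simp only [term]; rw [coeffXY_pow_eq_zero hP (by omega), mul_zero])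
  refine ⟨(finite_toSet _).subset hsupp, ?_⟩
  change _ = ∑ᶠ k, term k
  rw [finsum_eq_sum_of_support_subset _ hsupp, ← pow_one f,
    coeff_pow_eq_lagrangeCoeff hP hf0 hPf one_pos, lagrangeCoeff, sum_Ico_eq_sum_range]
  refine sum_congr rfl fun k _ => ?_
  simp [term, add_comm]
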